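/- arXiv:2305.05426 — 6 statements merged into one kernel-verified Lean document; each statement's English description precedes it below -/
import Mathlib

section
/- For all real numbers R, c, ε, ρ, θ > 0, all real σ, and all real μ ≠ 0, the 4×4 matrix M(ρ,θ,σ;μ) with rows (μ, ρ, 0, 0), (Rθ, ρμ, Rρ, 1), (−Rθμ, σ, ρcμ, 0), (εσμ/θ, 1 + ερσ/θ, −εσρμ/θ², ερμ/θ) is singular (has determinant zero) if and only if μ² = Rθ + θ/(ερ²) + (1/(ρ²c))·(R²ρ²θ + 2Rρσ + σ²/θ). -/
section CharacteristicMatrix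

variable {K : Type*} [Field K]

def characteristicMatrix (R c ε ρ θ σ μ : K) : Matrix (Fin 4) (Fin 4) K :=
  !![μ, ρ, 0, 0;
     R * θ, ρ * μ, R * ρ, 1;
     -(R * θ) * μ, σ, ρ * c * μ, 0;
     ε * σ * μ / θ, 1 + ε * ρ * σ / θ, -(ε * σ * ρ * μ) / θ ^ 2, ε * ρ * μ / θ]

def characteristicSpeedSq (R c ε ρ θ σ : K) : K :=
  R * θ + θ / (ε * ρ ^ 2) + (1 / (ρ ^ 2 * c)) * (R ^ 2 * ρ ^ 2 * θ + 2 * R * ρ * σ + σ ^ 2 / θ)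

theorem det_characteristicMatrix {R c ε ρ θ : K} (hc : c ≠ 0) (hε : ε ≠ 0) (hρ : ρ ≠ 0)
    (hθ : θ ≠ 0) (σ μ : K) :
    (characteristicMatrix R c ε ρ θ σ μ).det =
      ε * c * ρ ^ 3 / θ * μ ^ 2 * (μ ^ 2 - characteristicSpeedSq R c ε ρ θ σ) := by
  rw [characteristicMatrix, characteristicSpeedSq, Matrix.det_succ_row_zero]
  simp [Fin.sum_univ_succ, Matrix.det_fin_three, Fin.succAbove]
  field_simp
  ring

theorem det_characteristicMatrix_eq_zero_iff {R c ε ρ θ μ : K} (hc : c ≠ 0) (hε : ε ≠ 0)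
    (hρ : ρ ≠ 0) (hθ : θ ≠ 0) (hμ : μ ≠ 0) (σ : K) :
    (characteristicMatrix R c ε ρ θ σ μ).det = 0 ↔ μ ^ 2 = characteristicSpeedSq R c ε ρ θ σ := by
  have hprefactor : ε * c * ρ ^ 3 / θ * μ ^ 2 ≠ 0 := by simp [*]
  rw [det_characteristicMatrix hc hε hρ hθ, mul_eq_zero, sub_eq_zero, or_iff_right hprefactor]

end CharacteristicMatrix

theorem singular_iff_characteristic_speed_general
    (R c ε ρ θ : ℝ) (hc : 0 < c) (hε : 0 < ε) (hρ : 0 < ρ) (hθ : 0 < θ)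
    (σ : ℝ) (μ : ℝ) (hμ : μ ≠ 0) :
    (Matrix.det !![μ, ρ, 0, 0;
                   R * θ, ρ * μ, R * ρ, 1;
                   -(R * θ) * μ, σ, ρ * c * μ, 0;
                   ε * σ * μ / θ, 1 + ε * ρ * σ / θ, -(ε * σ * ρ * μ) / θ ^ 2, ε * ρ * μ / θ]
      = 0)
      ↔ μ ^ 2 = R * θ + θ / (ε * ρ ^ 2)
          + (1 / (ρ ^ 2 * c)) * (R ^ 2 * ρ ^ 2 * θ + 2 * R * ρ * σ + σ ^ 2 / θ) :=
  det_characteristicMatrix_eq_zero_iff hc.ne' hε.ne' hρ.ne' hθ.ne' hμ σ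

/-- For `μ ≠ 0`, the characteristic matrix of Ruggeri's hyperbolic Navier–Stokes
system without heat conduction is singular iff
`μ² = Rθ + θ/(ερ²) + (R²ρ²θ + 2Rρσ + σ²/θ)/(ρ²c)`. -/
theorem singular_iff_characteristic_speed
    (R c ε ρ θ : ℝ) (hR : 0 < R) (hc : 0 < c) (hε : 0 < ε) (hρ : 0 < ρ) (hθ : 0 < θ)
    (σ : ℝ) (μ : ℝ) (hμ : μ ≠ 0) :
    (Matrix.det !![μ, ρ, 0, 0;
                   R * θ, ρ * μ, R * ρ, 1;
                   -(R * θ) * μ, σ, ρ * c * μ, 0;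
                   ε * σ * μ / θ, 1 + ε * ρ * σ / θ, -(ε * σ * ρ * μ) / θ ^ 2, ε * ρ * μ / θ]
      = 0)
      ↔ μ ^ 2 = R * θ + θ / (ε * ρ ^ 2)
          + (1 / (ρ ^ 2 * c)) * (R ^ 2 * ρ ^ 2 * θ + 2 * R * ρ * σ + σ ^ 2 / θ) :=
  singular_iff_characteristic_speed_general R c ε ρ θ hc hε hρ hθ σ μ hμ
end

section
/- Fix real constants R, c, ε > 0 and define, on the open set of points (ρ, u, θ, σ) ∈ ℝ⁴ with ρ > 0 and θ > 0, the function λ(ρ,u,θ,σ) = u − √(Rθ + θ/(ερ²) + (R²ρ²θ + 2Rρσ + σ²/θ)/(ρ²c)). Then at any point (ρ*, u*, θ*, 0) with ρ*, θ* > 0, λ is differentiable and its directional derivative in the direction r = (ερ*²/θ*, −ερ*μ*/θ*, εRρ*/c, 1), where μ* = √(Rθ* + R²θ*/c + θ*/(ερ*²)), is strictly negative (in particular nonzero). -/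
/-!
On `ρ, θ > 0` the radicand `μ²` equals `Rθ + θ/(ερ²) + (Rρθ + σ)²/(θρ²c) > 0`, so `λ` is smooth
there. Along the line through the equilibrium in the direction `r`, `μ²` has derivative
`A = εR²ρ/c + 3R/(ρc) + εR³ρ/c² − 2/ρ`, hence `r·∇λ = −ερμ/θ − A/(2μ) = −(2ερμ² + θA)/(2μθ)`.
Substituting the equilibrium value of `μ²`, the only negative term `−2θ/ρ` of `θA` cancels against
the term `2θ/ρ` of `2ερμ²`, and what remains is a sum of positive terms.
-/

open Real Filter Topology

noncomputable def charSpeedSq (R c ε ρ θ σ : ℝ) : ℝ :=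
  R * θ + θ / (ε * ρ ^ 2) + (R ^ 2 * ρ ^ 2 * θ + 2 * R * ρ * σ + σ ^ 2 / θ) / (ρ ^ 2 * c)

/-- The characteristic speed `λ = u − μ` in the state variables `v = (ρ, u, θ, σ)`. -/
noncomputable def charSpeed (R c ε : ℝ) (v : Fin 4 → ℝ) : ℝ :=
  v 1 - √(charSpeedSq R c ε (v 0) (v 2) (v 3))

section

variable {R c ε ρ θ : ℝ}

theorem charSpeedSq_eq_add_sq (hθ : θ ≠ 0) (σ : ℝ) :
    charSpeedSq R c ε ρ θ σ = R * θ + θ / (ε * ρ ^ 2) + (R * ρ * θ + σ) ^ 2 / θ / (ρ ^ 2 * c) := by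
  rw [charSpeedSq]
  congr 3
  field_simp
  ring

theorem charSpeedSq_pos (hR : 0 ≤ R) (hc : 0 ≤ c) (hε : 0 < ε) (hρ : 0 < ρ) (hθ : 0 < θ)
    (σ : ℝ) : 0 < charSpeedSq R c ε ρ θ σ := by
  rw [charSpeedSq_eq_add_sq hθ.ne']
  positivity

theorem charSpeedSq_zero (hρ : ρ ≠ 0) :
    charSpeedSq R c ε ρ θ 0 = R * θ + R ^ 2 * θ / c + θ / (ε * ρ ^ 2) := by
  rw [charSpeedSq, mul_assoc (R ^ 2), mul_comm (R ^ 2), mul_assoc]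
  simp only [mul_zero, add_zero, ne_eq, OfNat.ofNat_ne_zero, not_false_eq_true, zero_pow,
    zero_div]
  rw [mul_div_mul_left _ _ (pow_ne_zero 2 hρ)]
  ring

theorem differentiableAt_charSpeed (hR : 0 ≤ R) (hc : 0 < c) (hε : 0 < ε) {v : Fin 4 → ℝ}
    (h0 : 0 < v 0) (h2 : 0 < v 2) : DifferentiableAt ℝ (charSpeed R c ε) v := by
  have hsq : DifferentiableAt ℝ (fun v : Fin 4 → ℝ => charSpeedSq R c ε (v 0) (v 2) (v 3)) v := by
    unfold charSpeedSq
    fun_prop (disch := positivity)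
  exact (differentiableAt_apply 1 v).sub (hsq.sqrt (charSpeedSq_pos hR hc.le hε h0 h2 _).ne')

theorem hasDerivAt_charSpeedSq_line (hρ : ρ ≠ 0) (hθ : θ ≠ 0) (hc : c ≠ 0) (hε : ε ≠ 0)
    (a b : ℝ) :
    HasDerivAt (fun t => charSpeedSq R c ε (ρ + t * a) (θ + t * b) t)
      (b * (R + 1 / (ε * ρ ^ 2) + R ^ 2 / c) - 2 * θ * a / (ε * ρ ^ 3) + 2 * R / (ρ * c)) 0 := by
  have hρt : HasDerivAt (fun t : ℝ => ρ + t * a) a 0 := by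
    simpa using ((hasDerivAt_id (0 : ℝ)).mul_const a).const_add ρ
  have hθt : HasDerivAt (fun t : ℝ => θ + t * b) b 0 := by
    simpa using ((hasDerivAt_id (0 : ℝ)).mul_const b).const_add θ
  have hσt : HasDerivAt (fun t : ℝ => t) 1 0 := hasDerivAt_id 0
  have h := ((hθt.const_mul R).add (hθt.div ((hρt.pow 2).const_mul ε) (by simp [hε, hρ]))).add
    ((((((hρt.pow 2).const_mul (R ^ 2)).mul hθt).add ((hρt.const_mul (2 * R)).mul hσt)).add
      ((hσt.pow 2).div hθt (by simpa))).div ((hρt.pow 2).mul_const c) (by simp [hc, hρ]))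
  refine h.congr_deriv ?_
  simp only [Pi.pow_apply, Pi.add_apply, Pi.mul_apply, Pi.div_apply, zero_mul, add_zero,
    mul_zero, zero_add, ne_eq, OfNat.ofNat_ne_zero, not_false_eq_true, zero_pow, zero_div]
  field_simp
  ring

theorem hasLineDerivAt_charSpeed (hR : 0 ≤ R) (hc : 0 < c) (hε : 0 < ε) (hρ : 0 < ρ)
    (hθ : 0 < θ) (u a w b : ℝ) :
    HasLineDerivAt ℝ (charSpeed R c ε)
      (w - (b * (R + 1 / (ε * ρ ^ 2) + R ^ 2 / c) - 2 * θ * a / (ε * ρ ^ 3) + 2 * R / (ρ * c))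
        / (2 * √(charSpeedSq R c ε ρ θ 0))) ![ρ, u, θ, 0] ![a, w, b, 1] := by
  have hu : HasDerivAt (fun t : ℝ => u + t * w) w 0 := by
    simpa using ((hasDerivAt_id (0 : ℝ)).mul_const w).const_add u
  have hμ := (hasDerivAt_charSpeedSq_line (R := R) hρ.ne' hθ.ne' hc.ne' hε.ne' a b).sqrt
    (by simpa using (charSpeedSq_pos hR hc.le hε hρ hθ 0).ne')
  have hspeed := hu.sub hμ
  simp only [zero_mul, add_zero] at hspeed
  unfold HasLineDerivAt
  convert hspeed using 2 with t
  simp [charSpeed]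

theorem lineDeriv_charSpeed_eigenvector_neg (hR : 0 < R) (hc : 0 < c) (hε : 0 < ε) (hρ : 0 < ρ)
    (hθ : 0 < θ) (u : ℝ) :
    lineDeriv ℝ (charSpeed R c ε) ![ρ, u, θ, 0]
      ![ε * ρ ^ 2 / θ, -(ε * ρ * √(charSpeedSq R c ε ρ θ 0)) / θ, ε * R * ρ / c, 1] < 0 := by
  rw [(hasLineDerivAt_charSpeed hR.le hc hε hρ hθ u _ _ _).lineDeriv]
  set μ := √(charSpeedSq R c ε ρ θ 0)
  have hμ : 0 < μ := sqrt_pos.2 (charSpeedSq_pos hR.le hc.le hε hρ hθ 0)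
  have hμ2 : μ ^ 2 = R * θ + R ^ 2 * θ / c + θ / (ε * ρ ^ 2) := by
    rw [sq_sqrt (charSpeedSq_pos hR.le hc.le hε hρ hθ 0).le, charSpeedSq_zero hρ.ne']
  set A := ε * R * ρ / c * (R + 1 / (ε * ρ ^ 2) + R ^ 2 / c)
      - 2 * θ * (ε * ρ ^ 2 / θ) / (ε * ρ ^ 3) + 2 * R / (ρ * c) with hA
  have hsplit : -(ε * ρ * μ) / θ - A / (2 * μ) = -(2 * ε * ρ * μ ^ 2 + θ * A) / (2 * μ * θ) := by
    field_simp
    ring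
  have hnum : 2 * ε * ρ * μ ^ 2 + θ * A = 2 * ε * R * ρ * θ + 3 * ε * R ^ 2 * ρ * θ / c
      + 3 * R * θ / (ρ * c) + ε * R ^ 3 * ρ * θ / c ^ 2 := by
    rw [hμ2, hA]
    field_simp
    ring
  rw [hsplit, hnum]
  exact div_neg_of_neg_of_pos (neg_neg_of_pos (by positivity)) (by positivity)

end

/-- Genuine nonlinearity at equilibrium for Ruggeri's hyperbolic Navier–Stokes
system without heat conduction: the characteristic speed
`λ(ρ,u,θ,σ) = u − √(Rθ + θ/(ερ²) + (R²ρ²θ + 2Rρσ + σ²/θ)/(ρ²c))` is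
differentiable at every equilibrium point `(ρ*, u*, θ*, 0)` with `ρ*, θ* > 0`,
and its directional derivative in the direction of the right eigenvector
`r = (ερ*²/θ*, −ερ*μ*/θ*, εRρ*/c, 1)` is strictly negative. -/
theorem genuinely_nonlinear_mode_no_heat
    (R c ε : ℝ) (hR : 0 < R) (hc : 0 < c) (hε : 0 < ε)
    (lam : (Fin 4 → ℝ) → ℝ)
    (hlam : ∀ v : Fin 4 → ℝ, 0 < v 0 → 0 < v 2 →
      lam v = v 1 - Real.sqrt (R * v 2 + v 2 / (ε * (v 0) ^ 2)
        + (R ^ 2 * (v 0) ^ 2 * v 2 + 2 * R * (v 0) * (v 3) + (v 3) ^ 2 / v 2)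
            / ((v 0) ^ 2 * c)))
    (ρs us θs : ℝ) (hρs : 0 < ρs) (hθs : 0 < θs)
    (μs : ℝ) (hμs : μs = Real.sqrt (R * θs + R ^ 2 * θs / c + θs / (ε * ρs ^ 2))) :
    DifferentiableAt ℝ lam ![ρs, us, θs, 0] ∧
      (fderiv ℝ lam ![ρs, us, θs, 0])
          ![ε * ρs ^ 2 / θs, -(ε * ρs * μs) / θs, ε * R * ρs / c, 1] < 0 := by
  have hloc : lam =ᶠ[𝓝 ![ρs, us, θs, 0]] charSpeed R c ε := by
    filter_upwards [(continuous_apply 0).continuousAt.eventually (lt_mem_nhds hρs),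
      (continuous_apply 2).continuousAt.eventually (lt_mem_nhds hθs)] with v h0 h2
    exact hlam v h0 h2
  have hdiff : DifferentiableAt ℝ (charSpeed R c ε) ![ρs, us, θs, 0] :=
    differentiableAt_charSpeed hR.le hc hε hρs hθs
  refine ⟨hloc.differentiableAt_iff.2 hdiff, ?_⟩
  rw [hloc.fderiv_eq, ← hdiff.lineDeriv_eq_fderiv, hμs, ← charSpeedSq_zero hρs.ne']
  exact lineDeriv_charSpeed_eigenvector_neg hR hc hε hρs hθs us
end

section
/- For all real numbers R, c, ε, δ, τ, θ > 0, the function λ ↦ det M₀(λ), where M₀(λ) is the 5×5 matrix with rows (−λ, −1, 0, 0, 0), (−Rθ/τ², −λ, R/τ, 1, 0), (0, Rθ/τ, −λc, 0, 1), (0, 1, 0, −ελ/θ, 0), (0, 0, 1, 0, −δλ/θ²), has exactly five real zeros, namely 0, λ₋, −λ₋, λ₊, −λ₊ with 0 < λ₋ < λ₊; in particular all five zeros are pairwise distinct (simple). -/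
/-!
Expanding the determinant gives `-(ε/θ) λ π₀(λ²)` with `π₀(x) = a x (x - L) - (x - s)`,
`a = cδ/θ²`, `s = λ*²`, `L = λ**²`. Since `0 < s < L`, the discriminant `D = (aL + 1)² - 4as` of `π₀`
exceeds `(as + 1)² - 4as = (as - 1)² ≥ 0`, and `D < (aL + 1)²`, so both roots `(aL + 1 ± √D)/(2a)`
are positive and distinct. The zeros of the determinant are therefore `0` and `±λ₋, ±λ₊`, the square
roots of these two roots.
-/

/-- The polynomial `π₀`, with `a = cδ/θ²`, `s = λ*²` and `L = λ**²`. -/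
def speedPoly (a s L x : ℝ) : ℝ := a * x * (x - L) - (x - s)

theorem exists_pos_roots_speedPoly {a s L : ℝ} (ha : 0 < a) (hs : 0 < s) (hsL : s < L) :
    ∃ xm xp : ℝ, 0 < xm ∧ xm < xp ∧ ∀ x, speedPoly a s L x = 0 ↔ x = xm ∨ x = xp := by
  set B := a * L + 1
  have hasB : a * s + 1 < B := by have := mul_lt_mul_of_pos_left hsL ha; linarith
  have hdiscrim : 0 < discrim a (-B) s := by
    have hsq : (a * s + 1) ^ 2 < B ^ 2 := by gcongr
    rw [discrim]
    nlinarith [sq_nonneg (a * s - 1)]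
  set r := √(discrim a (-B) s)
  have hr : 0 < r := Real.sqrt_pos.mpr hdiscrim
  have hrr : discrim a (-B) s = r * r := (Real.mul_self_sqrt hdiscrim.le).symm
  have hrB : r < B := by
    have : r * r < B * B := by rw [← hrr, discrim]; nlinarith [mul_pos ha hs]
    exact lt_of_mul_self_lt_mul_self₀ (by linarith [mul_pos ha hs]) this
  refine ⟨(B - r) / (2 * a), (B + r) / (2 * a), div_pos (by linarith) (by positivity),
    by gcongr; linarith, fun x => ?_⟩
  have hquad : speedPoly a s L x = a * (x * x) + -B * x + s := by unfold speedPoly; ring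
  rw [hquad, quadratic_eq_zero_iff ha.ne' hrr, neg_neg, sub_eq_add_neg, or_comm]

theorem sq_eq_iff_eq_sqrt_or_eq_neg_sqrt {x y : ℝ} (hy : 0 ≤ y) :
    x ^ 2 = y ↔ x = √y ∨ x = -√y := by
  conv_lhs => rw [← Real.sq_sqrt hy]
  exact sq_eq_sq_iff_eq_or_eq_neg

theorem det_equilibrium_eq_mul_speedPoly (R c ε δ τ θ lam : ℝ)
    (hτ : τ ≠ 0) (hθ : θ ≠ 0) (hε : ε ≠ 0) (hc : c ≠ 0) :
    Matrix.det !![-lam, -1, 0, 0, 0;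
                  -(R * θ) / τ ^ 2, -lam, R / τ, 1, 0;
                  0, R * θ / τ, -lam * c, 0, 1;
                  0, 1, 0, -(ε * lam) / θ, 0;
                  0, 0, 1, 0, -(δ * lam) / θ ^ 2]
      = -(ε / θ) * lam * speedPoly (c * δ / θ ^ 2) (R * θ / τ ^ 2 + θ / ε)
          (R * θ / τ ^ 2 + θ / ε + R ^ 2 * θ / (τ ^ 2 * c)) (lam ^ 2) := by
  simp [Matrix.det_succ_row_zero, Fin.sum_univ_succ, Fin.succAbove, speedPoly]
  field_simp
  ring

/-- The equilibrium characteristic determinant of Ruggeri's hyperbolic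
Navier–Stokes system with heat conduction has exactly five real zeros
`0, ±λ₋, ±λ₊` with `0 < λ₋ < λ₊`; in particular all five are simple
(pairwise distinct). -/
theorem equilibrium_speeds_simple_heat
    (R c ε δ τ θ : ℝ) (hR : 0 < R) (hc : 0 < c) (hε : 0 < ε) (hδ : 0 < δ)
    (hτ : 0 < τ) (hθ : 0 < θ) :
    ∃ lm lp : ℝ, 0 < lm ∧ lm < lp ∧
      ∀ lam : ℝ,
        Matrix.det !![-lam, -1, 0, 0, 0;
                      -(R * θ) / τ ^ 2, -lam, R / τ, 1, 0;
                      0, R * θ / τ, -lam * c, 0, 1;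
                      0, 1, 0, -(ε * lam) / θ, 0;
                      0, 0, 1, 0, -(δ * lam) / θ ^ 2] = 0
          ↔ lam = 0 ∨ lam = lm ∨ lam = -lm ∨ lam = lp ∨ lam = -lp := by
  have hsL : R * θ / τ ^ 2 + θ / ε < R * θ / τ ^ 2 + θ / ε + R ^ 2 * θ / (τ ^ 2 * c) :=
    lt_add_of_pos_right _ (by positivity)
  obtain ⟨xm, xp, hxm, hxmp, hroots⟩ :=
    exists_pos_roots_speedPoly (by positivity : 0 < c * δ / θ ^ 2) (by positivity) hsL
  refine ⟨√xm, √xp, Real.sqrt_pos.mpr hxm, Real.sqrt_lt_sqrt hxm.le hxmp, fun lam => ?_⟩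
  have hcoeff : -(ε / θ) ≠ 0 := neg_ne_zero.mpr (div_pos hε hθ).ne'
  rw [det_equilibrium_eq_mul_speedPoly R c ε δ τ θ lam hτ.ne' hθ.ne' hε.ne' hc.ne']
  simp only [mul_eq_zero, hcoeff, false_or, hroots, sq_eq_iff_eq_sqrt_or_eq_neg_sqrt hxm.le,
    sq_eq_iff_eq_sqrt_or_eq_neg_sqrt (hxm.trans hxmp).le, or_assoc]
end

section
/- Let R, c, ε, δ, τ, θ > 0, set λ*² = Rθ/τ² + θ/ε and p_θ = R/τ, and let λ be a nonzero real number with c(δ/θ²)·λ²·(λ² − (λ*² + R²θ/(τ²c))) − (λ² − λ*²) = 0. Then the vector r = (−ε/θ, ελ/θ, (ε/(θp_θ))(λ² − λ*²), 1, (εθ/(δp_θ))·(λ² − λ*²)/λ) ∈ ℝ⁵ satisfies M₀(λ)·r = 0, where M₀(λ) is the 5×5 matrix with rows (−λ, −1, 0, 0, 0), (−Rθ/τ², −λ, R/τ, 1, 0), (0, Rθ/τ, −λc, 0, 1), (0, 1, 0, −ελ/θ, 0), (0, 0, 1, 0, −δλ/θ²). -/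
/-!
The components of `r` are obtained by solving rows 1, 2, 4 and 5 of `M₀(λ) r = 0` with `r₄ = 1`,
so those rows vanish identically. The third row is a nonzero multiple of `π₀(λ²)`, hence it
vanishes exactly at the nonzero characteristic speeds.
-/

namespace RuggeriHeat

open Matrix

variable {K : Type*} [Field K]

/-- `λ*²` -/
def lamStarSq (R ε τ θ : K) : K := R * θ / τ ^ 2 + θ / ε

/-- `λ**²` -/
def lamStarStarSq (R c ε τ θ : K) : K := lamStarSq R ε τ θ + R ^ 2 * θ / (τ ^ 2 * c)

/-- `π₀`, as a polynomial function of `x = λ²`. -/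
def charPoly₀ (R c ε δ τ θ x : K) : K :=
  c * (δ / θ ^ 2) * x * (x - lamStarStarSq R c ε τ θ) - (x - lamStarSq R ε τ θ)

def charMatrix₀ (R c ε δ τ θ lam : K) : Matrix (Fin 5) (Fin 5) K :=
  !![-lam, -1, 0, 0, 0;
     -(R * θ) / τ ^ 2, -lam, R / τ, 1, 0;
     0, R * θ / τ, -lam * c, 0, 1;
     0, 1, 0, -(ε * lam) / θ, 0;
     0, 0, 1, 0, -(δ * lam) / θ ^ 2]

/-- `r`, with `p_θ = R / τ`. -/
def eigenvector₀ (R ε δ τ θ lam : K) : Fin 5 → K :=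
  ![-ε / θ, ε * lam / θ, (ε / (θ * (R / τ))) * (lam ^ 2 - lamStarSq R ε τ θ), 1,
    (ε * θ / (δ * (R / τ))) * ((lam ^ 2 - lamStarSq R ε τ θ) / lam)]

variable {R c ε δ τ θ lam : K}

theorem charMatrix₀_mulVec_eigenvector₀ (hR : R ≠ 0) (hc : c ≠ 0) (hε : ε ≠ 0) (hδ : δ ≠ 0)
    (hτ : τ ≠ 0) (hθ : θ ≠ 0) (hlam : lam ≠ 0) :
    charMatrix₀ R c ε δ τ θ lam *ᵥ eigenvector₀ R ε δ τ θ lam =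
      Pi.single 2 (-(θ * ε * τ / (δ * R * lam)) * charPoly₀ R c ε δ τ θ (lam ^ 2)) := by
  ext i
  fin_cases i <;>
    simp only [charMatrix₀, eigenvector₀, charPoly₀, lamStarStarSq, lamStarSq, mulVec, dotProduct,
      Fin.sum_univ_five, Fin.zero_eta, Fin.mk_one, Fin.reduceFinMk, Fin.isValue, of_apply, cons_val',
      cons_val_fin_one, cons_val, cons_val_zero, cons_val_one, Pi.single_eq_same,
      Pi.single_eq_of_ne, ne_eq, Fin.reduceEq, not_false_eq_true] <;>
    field_simp <;> ring

end RuggeriHeat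

/-- For any nonzero characteristic speed `λ` at equilibrium, the vector
`r = (−ε/θ, ελ/θ, (ε/(θp_θ))(λ² − λ*²), 1, (εθ/(δp_θ))(λ² − λ*²)/λ)` lies in
the kernel of the equilibrium characteristic matrix `M₀(λ)` of Ruggeri's
hyperbolic Navier–Stokes system with heat conduction. -/
theorem eigenvector_equilibrium_heat
    (R c ε δ τ θ : ℝ) (hR : 0 < R) (hc : 0 < c) (hε : 0 < ε) (hδ : 0 < δ)
    (hτ : 0 < τ) (hθ : 0 < θ) (lam : ℝ) (hlam : lam ≠ 0)
    (hchar : c * (δ / θ ^ 2) * lam ^ 2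
          * (lam ^ 2 - ((R * θ / τ ^ 2 + θ / ε) + R ^ 2 * θ / (τ ^ 2 * c)))
        - (lam ^ 2 - (R * θ / τ ^ 2 + θ / ε)) = 0) :
    (!![-lam, -1, 0, 0, 0;
        -(R * θ) / τ ^ 2, -lam, R / τ, 1, 0;
        0, R * θ / τ, -lam * c, 0, 1;
        0, 1, 0, -(ε * lam) / θ, 0;
        0, 0, 1, 0, -(δ * lam) / θ ^ 2]).mulVec
      ![-ε / θ, ε * lam / θ,
        (ε / (θ * (R / τ))) * (lam ^ 2 - (R * θ / τ ^ 2 + θ / ε)), 1,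
        (ε * θ / (δ * (R / τ))) * ((lam ^ 2 - (R * θ / τ ^ 2 + θ / ε)) / lam)] = 0 := by
  have hπ : RuggeriHeat.charPoly₀ R c ε δ τ θ (lam ^ 2) = 0 := hchar
  change (RuggeriHeat.charMatrix₀ R c ε δ τ θ lam).mulVec
    (RuggeriHeat.eigenvector₀ R ε δ τ θ lam) = 0
  rw [RuggeriHeat.charMatrix₀_mulVec_eigenvector₀ hR.ne' hc.ne' hε.ne' hδ.ne' hτ.ne' hθ.ne' hlam,
    hπ, mul_zero, Pi.single_zero]
end

section
/- Fix R, c, ε, δ > 0 and λ a nonzero real number, and define Π(τ, θ, σ, q; λ) as the determinant of the 5×5 matrix M(τ, θ, σ, q; λ) with rows (−λ, −1, 0, 0, 0), (−Rθ/τ², −λ, R/τ, 1, 0), (0, Rθ/τ + σ, −λc, 0, 1), (0, 1, εσλ/θ², −ελ/θ, 0), (0, 0, 2δqλ/θ³ + 1, 0, −δλ/θ²). Then at any equilibrium point (τ, θ, 0, 0) with τ, θ > 0, setting p_θ = R/τ and λ*² = Rθ/τ² + θ/ε, one has (εθ/(δp_θ))·((λ² − λ*²)/λ)·∂Π/∂q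 = (2ε²τ/(Rθ³))·λ·(λ² − λ*²)². -/
/-! Only the entry `2δqλ/θ³ + 1` of the last row of `M` depends on `q`, so `Π` is affine in `q`
with slope `2δλ/θ³` times the cofactor of that entry. The cofactor equals `(ελ/θ)(λ² − λ*²)`
whatever `σ` and `q` are, and this gives the identity after clearing denominators. -/

open Matrix

theorem hasDerivAt_det_updateRow_add_smul {𝕜 n : Type*} [NontriviallyNormedField 𝕜] [Fintype n]
    [DecidableEq n] (A : Matrix n n 𝕜) (i : n) (v : n → 𝕜) (t : 𝕜) :
    HasDerivAt (fun s => (A.updateRow i (A i + s • v)).det) (A.updateRow i v).det t := by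
  have hline : (fun s => (A.updateRow i (A i + s • v)).det)
      = fun s => A.det + s * (A.updateRow i v).det := by
    funext s
    rw [det_updateRow_add, det_updateRow_smul, updateRow_eq_self]
  rw [hline]
  simpa using ((hasDerivAt_id t).mul_const (A.updateRow i v).det).const_add A.det

noncomputable def charMatrix (R c ε δ τ θ σ q lam : ℝ) : Matrix (Fin 5) (Fin 5) ℝ :=
  !![-lam, -1, 0, 0, 0;
     -(R * θ) / τ ^ 2, -lam, R / τ, 1, 0;
     0, R * θ / τ + σ, -lam * c, 0, 1;
     0, 1, ε * σ * lam / θ ^ 2, -(ε * lam) / θ, 0;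
     0, 0, 2 * δ * q * lam / θ ^ 3 + 1, 0, -(δ * lam) / θ ^ 2]

section charMatrix

variable (R c ε δ τ θ σ q lam : ℝ)

theorem charMatrix_eq_updateRow :
    charMatrix R c ε δ τ θ σ q lam = (charMatrix R c ε δ τ θ σ 0 lam).updateRow 4
      (charMatrix R c ε δ τ θ σ 0 lam 4 +
        q • (Pi.single 2 (2 * δ * lam / θ ^ 3) : Fin 5 → ℝ)) := by
  ext i j
  fin_cases i <;> fin_cases j <;> simp [charMatrix]
  ring

theorem det_charMatrix_updateRow_single (x : ℝ) (hε : ε ≠ 0) (hθ : θ ≠ 0) :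
    ((charMatrix R c ε δ τ θ σ q lam).updateRow 4 (Pi.single 2 x : Fin 5 → ℝ)).det
      = x * (ε * lam / θ) * (lam ^ 2 - (R * θ / τ ^ 2 + θ / ε)) := by
  simp [charMatrix, det_succ_row_zero, Fin.sum_univ_succ, Fin.succAbove, Pi.single_apply]
  field_simp
  ring

theorem hasDerivAt_det_charMatrix_q (hε : ε ≠ 0) (hθ : θ ≠ 0) :
    HasDerivAt (fun s => (charMatrix R c ε δ τ θ σ s lam).det)
      (2 * δ * ε * lam ^ 2 / θ ^ 4 * (lam ^ 2 - (R * θ / τ ^ 2 + θ / ε))) q := by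
  have hline := hasDerivAt_det_updateRow_add_smul (charMatrix R c ε δ τ θ σ 0 lam) 4
    (Pi.single 2 (2 * δ * lam / θ ^ 3)) q
  simp_rw [← charMatrix_eq_updateRow,
    det_charMatrix_updateRow_single R c ε δ τ θ σ 0 lam _ hε hθ] at hline
  exact hline.congr_deriv (by ring)

end charMatrix

theorem dPi_dq_at_equilibrium_general
    (R c ε δ : ℝ) (hR : 0 < R) (hε : 0 < ε) (hδ : 0 < δ)
    (lam : ℝ) (hlam : lam ≠ 0) (τ θ : ℝ) (hτ : 0 < τ) (hθ : 0 < θ) :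
    (ε * θ / (δ * (R / τ))) * ((lam ^ 2 - (R * θ / τ ^ 2 + θ / ε)) / lam) *
        deriv (fun s : ℝ =>
          Matrix.det !![-lam, -1, 0, 0, 0;
                        -(R * θ) / τ ^ 2, -lam, R / τ, 1, 0;
                        0, R * θ / τ + 0, -lam * c, 0, 1;
                        0, 1, ε * 0 * lam / θ ^ 2, -(ε * lam) / θ, 0;
                        0, 0, 2 * δ * s * lam / θ ^ 3 + 1, 0, -(δ * lam) / θ ^ 2]) 0
      = (2 * ε ^ 2 * τ / (R * θ ^ 3)) * lam * (lam ^ 2 - (R * θ / τ ^ 2 + θ / ε)) ^ 2 := by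
  have hq := (hasDerivAt_det_charMatrix_q R c ε δ τ θ 0 0 lam hε.ne' hθ.ne').deriv
  unfold charMatrix at hq
  rw [hq]
  field_simp

/-- The `q`-derivative term of the genuine-nonlinearity computation: with
`Π = det M`, at equilibrium (`σ = q = 0`),
`(εθ/(δp_θ))·((λ² − λ*²)/λ)·∂Π/∂q = (2ε²τ/(Rθ³))·λ·(λ² − λ*²)²`,
where `p_θ = R/τ` and `λ*² = Rθ/τ² + θ/ε`. -/
theorem dPi_dq_at_equilibrium
    (R c ε δ : ℝ) (hR : 0 < R) (hc : 0 < c) (hε : 0 < ε) (hδ : 0 < δ)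
    (lam : ℝ) (hlam : lam ≠ 0) (τ θ : ℝ) (hτ : 0 < τ) (hθ : 0 < θ) :
    (ε * θ / (δ * (R / τ))) * ((lam ^ 2 - (R * θ / τ ^ 2 + θ / ε)) / lam) *
        deriv (fun s : ℝ =>
          Matrix.det !![-lam, -1, 0, 0, 0;
                        -(R * θ) / τ ^ 2, -lam, R / τ, 1, 0;
                        0, R * θ / τ + 0, -lam * c, 0, 1;
                        0, 1, ε * 0 * lam / θ ^ 2, -(ε * lam) / θ, 0;
                        0, 0, 2 * δ * s * lam / θ ^ 3 + 1, 0, -(δ * lam) / θ ^ 2]) 0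
      = (2 * ε ^ 2 * τ / (R * θ ^ 3)) * lam * (lam ^ 2 - (R * θ / τ ^ 2 + θ / ε)) ^ 2 :=
  dPi_dq_at_equilibrium_general R c ε δ hR hε hδ lam hlam τ θ hτ hθ
end

section
/- Fix R, c, ε, δ, θ > 0. Then there exists τ₀ > 0 such that for all τ with 0 < τ < τ₀ the following holds. Let λ*² = Rθ/τ² + θ/ε, λ**² = λ*² + R²θ/(τ²c), let λ₊² be the larger of the two real roots of the quadratic x ↦ c(δ/θ²)x(x − λ**²) − (x − λ*²), and let λ₊ = √(λ₊²) > 0. Then with λ_τ² = θ²/(δ(R+c)), λ_θ² = θ²/(δc) + 2θ/ε, α_τ = 2ε²δR(R+c)/(τ³θ⁴), α_θ = ε²δcτ/(Rθ), α_q = 2ε²τ/(Rθ³), the nonlinearity coefficient N = α_τ·λ₊·(λ₊² − λ_τ²) + α_θ·λ₊³·(λ₊² − λ*²)·(λ₊² − λ_θ²) + α_q·λ₊·(λ₊² − λ*²)² is strictly positive. -/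
set_option maxHeartbeats 1000000


/-- Computational core of Lemma 2: for sufficiently small specific volume `τ`,
the genuine-nonlinearity coefficient `N` of the fast mode `λ₊` (where `λ₊²` is
the larger root of `π₀(x) = c(δ/θ²)x(x − λ**²) − (x − λ*²)`) is strictly
positive. -/
theorem fast_mode_genuinely_nonlinear_small_tau
    (R c ε δ θ : ℝ) (hR : 0 < R) (hc : 0 < c) (hε : 0 < ε) (hδ : 0 < δ) (hθ : 0 < θ) :
    ∃ τ₀ : ℝ, 0 < τ₀ ∧ ∀ τ : ℝ, 0 < τ → τ < τ₀ →
      ∀ lp2 : ℝ,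
        (c * (δ / θ ^ 2) * lp2 *
              (lp2 - ((R * θ / τ ^ 2 + θ / ε) + R ^ 2 * θ / (τ ^ 2 * c)))
            - (lp2 - (R * θ / τ ^ 2 + θ / ε)) = 0) →
        (∀ x : ℝ,
          c * (δ / θ ^ 2) * x *
              (x - ((R * θ / τ ^ 2 + θ / ε) + R ^ 2 * θ / (τ ^ 2 * c)))
            - (x - (R * θ / τ ^ 2 + θ / ε)) = 0 → x ≤ lp2) →
        0 < (2 * ε ^ 2 * δ * R * (R + c) / (τ ^ 3 * θ ^ 4)) * Real.sqrt lp2 *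
              (lp2 - θ ^ 2 / (δ * (R + c)))
            + (ε ^ 2 * δ * c * τ / (R * θ)) * (Real.sqrt lp2) ^ 3 *
                (lp2 - (R * θ / τ ^ 2 + θ / ε)) *
                (lp2 - (θ ^ 2 / (δ * c) + 2 * θ / ε))
            + (2 * ε ^ 2 * τ / (R * θ ^ 3)) * Real.sqrt lp2 *
                (lp2 - (R * θ / τ ^ 2 + θ / ε)) ^ 2 := by
  set K : ℝ := θ ^ 2 / (δ * (R + c)) + θ ^ 2 / (δ * c) + 2 * θ / ε with hKdef
  have hK : 0 < K := by positivity
  refine ⟨Real.sqrt (R * θ / K), by positivity, ?_⟩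
  intro τ hτ hτlt lp2 hroot hmax
  -- basic facts
  have hτ2 : 0 < τ ^ 2 := by positivity
  have hθ2 : 0 < θ ^ 2 := by positivity
  -- τ² < Rθ/K hence Rθ/τ² > K
  have hsq : τ ^ 2 < R * θ / K := by
    have := Real.sq_sqrt (le_of_lt (by positivity : (0:ℝ) < R * θ / K))
    nlinarith [Real.sqrt_nonneg (R * θ / K), sq_nonneg (τ - Real.sqrt (R * θ / K))]
  have hKlt : K < R * θ / τ ^ 2 := by
    rw [lt_div_iff₀ hτ2]
    have h1 : τ ^ 2 * K < R * θ := by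
      have := (lt_div_iff₀ hK).1 hsq
      linarith
    linarith [mul_comm K (τ ^ 2)] 
  set m : ℝ := R * θ / τ ^ 2 + θ / ε with hmdef
  set M : ℝ := m + R ^ 2 * θ / (τ ^ 2 * c) with hMdef
  set a : ℝ := c * (δ / θ ^ 2) with hadef
  have ha : 0 < a := by positivity
  have hm : 0 < m := by positivity
  have hmM : m < M := by
    have : 0 < R ^ 2 * θ / (τ ^ 2 * c) := by positivity
    simp [hMdef]; linarith
  -- discriminant
  set b : ℝ := a * M + 1 with hbdef
  set D : ℝ := b ^ 2 - 4 * a * m with hDdef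
  have hD : 0 < D := by
    have h1 : (a * M - 1) ^ 2 ≥ 0 := sq_nonneg _
    have : 4 * a * m < 4 * a * M := by nlinarith
    nlinarith
  set s : ℝ := Real.sqrt D with hsdef
  have hs0 : 0 ≤ s := Real.sqrt_nonneg D
  have hs2 : s ^ 2 = D := Real.sq_sqrt hD.le
  set r : ℝ := (b + s) / (2 * a) with hrdef
  -- r is a root
  have hrroot : c * (δ / θ ^ 2) * r *
      (r - ((R * θ / τ ^ 2 + θ / ε) + R ^ 2 * θ / (τ ^ 2 * c)))
      - (r - (R * θ / τ ^ 2 + θ / ε)) = 0 := by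
    have key : a * r ^ 2 - b * r + m = 0 := by
      have ha' : a ≠ 0 := ne_of_gt ha
      have h4 : 4 * a * (a * r ^ 2 - b * r + m) = s ^ 2 - (b ^ 2 - 4 * a * m) := by
        rw [hrdef]; field_simp; ring
      have h5 : s ^ 2 - (b ^ 2 - 4 * a * m) = 0 := by rw [hs2, hDdef]; ring
      have h6 : 4 * a * (a * r ^ 2 - b * r + m) = 0 := by rw [h4]; exact h5
      exact (mul_eq_zero.mp h6).resolve_left (ne_of_gt (by positivity))
    have hM' : (R * θ / τ ^ 2 + θ / ε) + R ^ 2 * θ / (τ ^ 2 * c) = M := rfl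
    have hm' : R * θ / τ ^ 2 + θ / ε = m := rfl
    rw [hM', hm']
    have : c * (δ / θ ^ 2) = a := rfl
    rw [this]
    simp only [hbdef] at key
    linear_combination key
  have hrle : r ≤ lp2 := hmax r hrroot
  -- r > M
  have hsgt : a * M - 1 < s := by
    rcases le_or_gt s (a * M - 1) with h | h
    · exfalso
      have : s ^ 2 ≥ (a * M - 1) ^ 2 := by nlinarith
      have hD2 : D - (a * M - 1) ^ 2 = 4 * a * (M - m) := by
        simp [hDdef, hbdef]; ring
      nlinarith
    · exact h
  have hrM : M < r := by
    rw [hrdef, lt_div_iff₀ (by positivity : (0:ℝ) < 2 * a)]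
    simp [hbdef]; nlinarith
  have hlM : M < lp2 := lt_of_lt_of_le hrM hrle
  -- consequences
  have hlm : m < lp2 := lt_trans hmM hlM
  have hlK : K < lp2 := by
    have h7 : R * θ / τ ^ 2 ≤ m := by
      rw [hmdef]; nlinarith [div_pos hθ hε]
    exact lt_trans (lt_of_lt_of_le hKlt h7) hlm
  have hl0 : 0 < lp2 := lt_trans hK hlK
  have hsl : 0 < Real.sqrt lp2 := Real.sqrt_pos.2 hl0
  have hlτ : θ ^ 2 / (δ * (R + c)) < lp2 := by
    have h1 : 0 < θ ^ 2 / (δ * c) := by positivity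
    have h2 : 0 < 2 * θ / ε := by positivity
    simp only [hKdef] at hlK; linarith
  have hlθ : θ ^ 2 / (δ * c) + 2 * θ / ε < lp2 := by
    have h1 : 0 < θ ^ 2 / (δ * (R + c)) := by positivity
    simp only [hKdef] at hlK; linarith
  have t1 : 0 < (2 * ε ^ 2 * δ * R * (R + c) / (τ ^ 3 * θ ^ 4)) * Real.sqrt lp2 *
      (lp2 - θ ^ 2 / (δ * (R + c))) := by
    apply mul_pos (mul_pos (by positivity) hsl) (by linarith)
  have t2 : 0 < (ε ^ 2 * δ * c * τ / (R * θ)) * (Real.sqrt lp2) ^ 3 *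
      (lp2 - m) * (lp2 - (θ ^ 2 / (δ * c) + 2 * θ / ε)) := by
    apply mul_pos (mul_pos (mul_pos (by positivity) (by positivity)) (by linarith)) (by linarith)
  have t3 : 0 < (2 * ε ^ 2 * τ / (R * θ ^ 3)) * Real.sqrt lp2 * (lp2 - m) ^ 2 := by
    apply mul_pos (mul_pos (by positivity) hsl)
    have : lp2 - m ≠ 0 := by linarith
    positivity
  linarith
end
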